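/- Let n ≥ 2 and let K_n be the complete graph on n vertices. Then ‖M_{K_n}‖_2 := sup{ ‖M_{K_n} f‖_2 / ‖f‖_2 : f : V → ℝ, f ≠ 0 } = max over k ∈ {⌊n/3⌋, ⌈n/3⌉} of ( 1 − k/(2n) + (4kn − 3k²)^{1/2}/(2n) )^{1/2}, where ⌊x⌋ and ⌈x⌉ denote the floor and ceiling of x. Moreover, the supremum is attained by some nonzero function f. -/

import Mathlib

open scoped Classical

/-- The ball of radius `r` around `e` in the graph metric of `G`
(only vertices reachable from `e` are at finite distance). -/
noncomputable def gball {V : Type*} [Fintype V] (G : SimpleGraph V) (e : V) (r : ℕ) :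
    Finset V :=
  Finset.univ.filter fun m => G.Reachable e m ∧ G.dist e m ≤ r

/-- The centered Hardy–Littlewood maximal function on a finite graph. -/
noncomputable def mxHL {V : Type*} [Fintype V] (G : SimpleGraph V) (f : V → ℝ) (e : V) : ℝ :=
  ⨆ r : ℕ, (1 / ((gball G e r).card : ℝ)) * ∑ m ∈ gball G e r, |f m|

/-- The fractional centered Hardy–Littlewood maximal function on a finite graph. -/
noncomputable def mxFr {V : Type*} [Fintype V] (G : SimpleGraph V) (α : ℝ) (f : V → ℝ)
    (e : V) : ℝ :=
  ⨆ r : ℕ, ((gball G e r).card : ℝ) ^ (α - 1) * ∑ m ∈ gball G e r, |f m|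

/-- The `p`-variation of `f : V → ℝ` with respect to the graph `G`
(vertices at distance `1` are exactly the adjacent ones). -/
noncomputable def vp {V : Type*} [Fintype V] (G : SimpleGraph V) (p : ℝ) (f : V → ℝ) : ℝ :=
  ((1 / 2) * ∑ v : V, ∑ w : V, if G.Adj v w then |f v - f w| ^ p else 0) ^ (1 / p)

/-- The star graph on `Fin n`, with center the vertex with value `0`. -/
def starG (n : ℕ) : SimpleGraph (Fin n) where
  Adj v w := v ≠ w ∧ (v.val = 0 ∨ w.val = 0)
  symm := ⟨fun _ _ h => ⟨h.1.symm, h.2.symm⟩⟩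
  loopless := ⟨fun _ h => h.1 rfl⟩

/-- The `ℓ²` norm of a function on a finite vertex set. -/
noncomputable def nrm2 {V : Type*} [Fintype V] (g : V → ℝ) : ℝ :=
  Real.sqrt (∑ v : V, g v ^ 2)

/-- The candidate value `(1 - k/(2n) + √(4kn - 3k²)/(2n))^(1/2)` for `‖M_{K_n}‖₂`. -/
noncomputable def knConst (n k : ℕ) : ℝ :=
  Real.sqrt (1 - (k : ℝ) / (2 * n) +
    Real.sqrt (4 * (k : ℝ) * n - 3 * (k : ℝ) ^ 2) / (2 * n))

/-!
On `K_n` every ball of positive radius is the whole vertex set, so `M f = max (|f|, A)` with `A`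
the mean of `|f|`. If `|f| ≥ A` exactly on a set of `k` vertices, Cauchy–Schwarz on this set and
on its complement bounds `‖M f‖₂²` by the quadratic form `x² + (n - k)/n² (√k x + √(n - k) y)²`
in the `ℓ²` norms `x, y` of `f` on the two sets, hence by `λ(k) ‖f‖₂²`, where
`λ(k) = 1 - k/(2n) + √(4kn - 3k²)/(2n)` is the top eigenvalue of that form. Conversely, for
`1 ≤ k ≤ n` the function taking two values along the top eigenvector attains `λ(k)`. Finally
`√(4kn - 3k²) - k` increases on `[0, n/3]` and decreases on `[n/3, n]`, so over the integers `λ`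
is maximal at `⌊n/3⌋` or `⌈n/3⌉`.
-/

open Finset

noncomputable def knEigenvalue (N K : ℝ) : ℝ :=
  1 - K / (2 * N) + √(4 * K * N - 3 * K ^ 2) / (2 * N)

section CompleteGraph

variable {V : Type*} [Fintype V]

lemma gball_top_zero (e : V) : gball (⊤ : SimpleGraph V) e 0 = {e} := by
  ext m
  simp only [gball, mem_filter, mem_univ, true_and, nonpos_iff_eq_zero, mem_singleton,
    SimpleGraph.dist_eq_zero_iff_eq_or_not_reachable]
  constructor
  · rintro ⟨hr, rfl | hnr⟩
    · rfl
    · exact absurd hr hnr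
  · rintro rfl
    exact ⟨.rfl, .inl rfl⟩

lemma gball_top_of_pos (e : V) {r : ℕ} (hr : 0 < r) : gball (⊤ : SimpleGraph V) e r = univ := by
  ext m
  simp only [gball, mem_filter, mem_univ, true_and, iff_true]
  rcases eq_or_ne e m with rfl | hem
  · simp
  · have hadj : (⊤ : SimpleGraph V).Adj e m := hem
    exact ⟨hadj.reachable, (SimpleGraph.dist_eq_one_iff_adj.mpr hadj).trans_le hr⟩

lemma mxHL_top (f : V → ℝ) (e : V) :
    mxHL (⊤ : SimpleGraph V) f e = max |f e| ((∑ m, |f m|) / Fintype.card V) := by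
  have hrange : Set.range (fun r : ℕ => (1 / (#(gball (⊤ : SimpleGraph V) e r) : ℝ)) *
      ∑ m ∈ gball ⊤ e r, |f m|) = {|f e|, (∑ m, |f m|) / Fintype.card V} := by
    ext x
    constructor
    · rintro ⟨r, rfl⟩
      rcases Nat.eq_zero_or_pos r with rfl | hr
      · simp [gball_top_zero]
      · simp [gball_top_of_pos e hr, div_eq_inv_mul]
    · rintro (rfl | rfl)
      · exact ⟨0, by simp [gball_top_zero]⟩
      · exact ⟨1, by simp [gball_top_of_pos e one_pos, div_eq_inv_mul]⟩
  rw [mxHL, iSup, hrange, csSup_pair]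

end CompleteGraph

section MaxSums

variable {V : Type*} [Fintype V]

lemma sum_max_sq_eq (f : V → ℝ) (c : ℝ) :
    ∑ i, max |f i| c ^ 2 =
      ∑ i ∈ {i | c ≤ |f i|}, f i ^ 2 + #({i | c ≤ |f i|} : Finset V)ᶜ * c ^ 2 := by
  rw [← sum_add_sum_compl {i | c ≤ |f i|}, ← nsmul_eq_mul, ← sum_const]
  congr 1 <;> refine sum_congr rfl fun i hi => ?_
  · rw [max_eq_left (mem_filter.mp hi).2, sq_abs]
  · rw [max_eq_right (not_le.mp (by simpa using hi)).le]

lemma sum_sq_add_card_compl_mul_sq_le (f : V → ℝ) {c : ℝ} (hc : 0 ≤ c) (S : Finset V) :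
    ∑ i ∈ S, f i ^ 2 + #Sᶜ * c ^ 2 ≤ ∑ i, max |f i| c ^ 2 := by
  rw [← sum_add_sum_compl S, ← nsmul_eq_mul, ← sum_const]
  refine add_le_add (sum_le_sum fun i _ => ?_) (sum_le_sum fun i _ => ?_)
  · rw [← sq_abs]
    exact pow_le_pow_left₀ (abs_nonneg _) (le_max_left _ _) 2
  · exact pow_le_pow_left₀ hc (le_max_right _ _) 2

lemma sum_comp_ite_mem (S : Finset V) (φ : ℝ → ℝ) (u v : ℝ) :
    ∑ i, φ (if i ∈ S then u else v) = #S * φ u + #Sᶜ * φ v := by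
  rw [← sum_add_sum_compl S, ← nsmul_eq_mul, ← nsmul_eq_mul, ← sum_const, ← sum_const]
  congr 1 <;> refine sum_congr rfl fun i hi => ?_
  · rw [if_pos hi]
  · rw [if_neg (mem_compl.1 hi)]

end MaxSums

lemma sum_abs_le_sqrt_card_mul_sqrt {ι : Type*} (s : Finset ι) (f : ι → ℝ) :
    ∑ i ∈ s, |f i| ≤ √(#s : ℝ) * √(∑ i ∈ s, f i ^ 2) := by
  simpa using Real.sum_mul_le_sqrt_mul_sqrt s (fun _ => 1) (fun i => |f i|)

lemma quadForm_le_of_sub_mul_sub_eq {a m d l : ℝ} (ha : a ≤ l) (hd : d ≤ l)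
    (h : (l - a) * (l - d) = m ^ 2) (x y : ℝ) :
    a * x ^ 2 + 2 * m * x * y + d * y ^ 2 ≤ l * (x ^ 2 + y ^ 2) := by
  rw [← sub_nonneg]
  rcases ha.eq_or_lt with rfl | hal
  · obtain rfl : m = 0 := by simpa using h.symm
    nlinarith [mul_nonneg (sub_nonneg.2 hd) (sq_nonneg y)]
  · have key : (l - a) * (l * (x ^ 2 + y ^ 2) - (a * x ^ 2 + 2 * m * x * y + d * y ^ 2)) =
        ((l - a) * x - m * y) ^ 2 := by
      linear_combination y ^ 2 * h
    exact (mul_nonneg_iff_of_pos_left (sub_pos.2 hal)).mp (key ▸ sq_nonneg _)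

section Eigenvalue

variable {N K : ℝ}

lemma knEigenvalue_zero (N : ℝ) : knEigenvalue N 0 = 1 := by
  simp [knEigenvalue]

lemma knEigenvalue_eq_one_add (N K : ℝ) :
    knEigenvalue N K = 1 + (√(4 * K * N - 3 * K ^ 2) - K) / (2 * N) := by
  unfold knEigenvalue
  ring

lemma sq_sqrt_four_mul_sub (hK : 0 ≤ K) (hKN : K ≤ N) :
    √(4 * K * N - 3 * K ^ 2) ^ 2 = 4 * K * N - 3 * K ^ 2 :=
  Real.sq_sqrt (by nlinarith)

lemma le_sqrt_four_mul_sub (hK : 0 ≤ K) (hKN : K ≤ N) : K ≤ √(4 * K * N - 3 * K ^ 2) :=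
  Real.le_sqrt_of_sq_le (by nlinarith)

lemma one_le_knEigenvalue (hK : 0 ≤ K) (hKN : K ≤ N) : 1 ≤ knEigenvalue N K := by
  rw [knEigenvalue_eq_one_add]
  exact le_add_of_nonneg_right
    (div_nonneg (sub_nonneg.2 (le_sqrt_four_mul_sub hK hKN)) (by linarith))

lemma knEigenvalue_sub_left (hN : N ≠ 0) :
    knEigenvalue N K - (1 + K * (N - K) / N ^ 2) =
      (N * √(4 * K * N - 3 * K ^ 2) - K * (3 * N - 2 * K)) / (2 * N ^ 2) := by
  unfold knEigenvalue
  field_simp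
  ring

lemma knEigenvalue_sub_right (hN : N ≠ 0) :
    knEigenvalue N K - (N - K) ^ 2 / N ^ 2 =
      (N * √(4 * K * N - 3 * K ^ 2) + K * (3 * N - 2 * K)) / (2 * N ^ 2) := by
  unfold knEigenvalue
  field_simp
  ring

lemma mul_sub_le_mul_sqrt (hK : 0 ≤ K) (hKN : K ≤ N) :
    K * (3 * N - 2 * K) ≤ N * √(4 * K * N - 3 * K ^ 2) := by
  calc K * (3 * N - 2 * K) ≤ √(N ^ 2 * (4 * K * N - 3 * K ^ 2)) :=
        Real.le_sqrt_of_sq_le (by nlinarith [mul_nonneg hK (pow_nonneg (sub_nonneg.2 hKN) 3)])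
    _ = N * √(4 * K * N - 3 * K ^ 2) := by
        rw [Real.sqrt_mul (sq_nonneg N), Real.sqrt_sq (hK.trans hKN)]

lemma le_knEigenvalue_left (hN : 0 < N) (hK : 0 ≤ K) (hKN : K ≤ N) :
    1 + K * (N - K) / N ^ 2 ≤ knEigenvalue N K := by
  rw [← sub_nonneg, knEigenvalue_sub_left hN.ne']
  exact div_nonneg (sub_nonneg.2 (mul_sub_le_mul_sqrt hK hKN)) (by positivity)

lemma le_knEigenvalue_right (hN : 0 < N) (hK : 0 ≤ K) (hKN : K ≤ N) :
    (N - K) ^ 2 / N ^ 2 ≤ knEigenvalue N K := by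
  rw [← sub_nonneg, knEigenvalue_sub_right hN.ne']
  have : 0 ≤ K * (3 * N - 2 * K) := mul_nonneg hK (by linarith)
  exact div_nonneg (add_nonneg (mul_nonneg hN.le (Real.sqrt_nonneg _)) this) (by positivity)

lemma knEigenvalue_sub_mul_sub (hN : N ≠ 0) (hK : 0 ≤ K) (hKN : K ≤ N) :
    (knEigenvalue N K - (1 + K * (N - K) / N ^ 2)) * (knEigenvalue N K - (N - K) ^ 2 / N ^ 2) =
      K * (N - K) ^ 3 / N ^ 4 := by
  have hw := sq_sqrt_four_mul_sub hK hKN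
  rw [knEigenvalue_sub_left hN, knEigenvalue_sub_right hN]
  generalize √(4 * K * N - 3 * K ^ 2) = w at hw ⊢
  field_simp
  linear_combination N ^ 2 * hw

lemma sq_add_mul_sq_le_knEigenvalue_mul (hN : 0 < N) (hK : 0 ≤ K) (hKN : K ≤ N) {α β : ℝ}
    (hα : α ^ 2 = K) (hβ : β ^ 2 = N - K) (x y : ℝ) :
    x ^ 2 + (N - K) / N ^ 2 * (α * x + β * y) ^ 2 ≤ knEigenvalue N K * (x ^ 2 + y ^ 2) := by
  have hchar : (knEigenvalue N K - (1 + K * (N - K) / N ^ 2)) *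
      (knEigenvalue N K - (N - K) ^ 2 / N ^ 2) = (α * β * (N - K) / N ^ 2) ^ 2 := by
    rw [knEigenvalue_sub_mul_sub hN.ne' hK hKN]
    linear_combination (-(N - K) ^ 2 / N ^ 4 * β ^ 2) * hα - ((N - K) ^ 2 / N ^ 4 * K) * hβ
  have := quadForm_le_of_sub_mul_sub_eq (le_knEigenvalue_left hN hK hKN)
    (le_knEigenvalue_right hN hK hKN) hchar x y
  linear_combination this + ((N - K) / N ^ 2 * x ^ 2) * hα + ((N - K) / N ^ 2 * y ^ 2) * hβ

/-- `(√K u, √(N - K) v)` is a top eigenvector of the quadratic form above, written in terms of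
the function equal to `u` on `K` vertices and to `v` on the other `N - K`. -/
lemma knEigenvalue_eigenvector (hN : N ≠ 0) (hK : 0 ≤ K) (hKN : K ≤ N) :
    K * (knEigenvalue N K - (N - K) ^ 2 / N ^ 2) ^ 2 +
        (N - K) * ((K * (knEigenvalue N K - (N - K) ^ 2 / N ^ 2) +
          (N - K) * (K * (N - K) / N ^ 2)) / N) ^ 2 =
      knEigenvalue N K * (K * (knEigenvalue N K - (N - K) ^ 2 / N ^ 2) ^ 2 +
        (N - K) * (K * (N - K) / N ^ 2) ^ 2) := by
  linear_combination (-K * (knEigenvalue N K - (N - K) ^ 2 / N ^ 2)) *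
    knEigenvalue_sub_mul_sub hN hK hKN

end Eigenvalue

section Unimodal

variable {N K J : ℝ}

lemma sqrt_sub_le_of_le_of_le_third (hK : 0 ≤ K) (hKJ : K ≤ J) (hJ : 3 * J ≤ N) :
    √(4 * K * N - 3 * K ^ 2) - K ≤ √(4 * J * N - 3 * J ^ 2) - J := by
  have hsK := sq_sqrt_four_mul_sub hK (by linarith : K ≤ N)
  have hsJ := sq_sqrt_four_mul_sub (hK.trans hKJ) (by linarith : J ≤ N)
  have hKle : √(4 * K * N - 3 * K ^ 2) ≤ 2 * N - 3 * K :=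
    Real.sqrt_le_iff.2 ⟨by linarith, by nlinarith⟩
  have hJle : √(4 * J * N - 3 * J ^ 2) ≤ 2 * N - 3 * J :=
    Real.sqrt_le_iff.2 ⟨by linarith, by nlinarith⟩
  nlinarith [mul_le_mul_of_nonneg_left (add_le_add hJle hKle) (sub_nonneg.2 hKJ),
    le_sqrt_four_mul_sub hK (by linarith : K ≤ N),
    le_sqrt_four_mul_sub (hK.trans hKJ) (by linarith : J ≤ N)]

lemma sqrt_sub_le_of_third_le_of_le (hJ : N ≤ 3 * J) (hJK : J ≤ K) (hKN : K ≤ N) :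
    √(4 * K * N - 3 * K ^ 2) - K ≤ √(4 * J * N - 3 * J ^ 2) - J := by
  have hJ0 : 0 ≤ J := by linarith
  have hsK := sq_sqrt_four_mul_sub (hJ0.trans hJK) hKN
  have hsJ := sq_sqrt_four_mul_sub hJ0 (hJK.trans hKN)
  have hKge : 2 * N - 3 * K ≤ √(4 * K * N - 3 * K ^ 2) := Real.le_sqrt_of_sq_le (by nlinarith)
  have hJge : 2 * N - 3 * J ≤ √(4 * J * N - 3 * J ^ 2) := Real.le_sqrt_of_sq_le (by nlinarith)
  nlinarith [mul_le_mul_of_nonneg_left (add_le_add hKge hJge) (sub_nonneg.2 hJK),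
    Real.sqrt_nonneg (4 * K * N - 3 * K ^ 2), Real.sqrt_nonneg (4 * J * N - 3 * J ^ 2)]

lemma knEigenvalue_le_knEigenvalue (hN : 0 ≤ N)
    (h : √(4 * K * N - 3 * K ^ 2) - K ≤ √(4 * J * N - 3 * J ^ 2) - J) :
    knEigenvalue N K ≤ knEigenvalue N J := by
  rw [knEigenvalue_eq_one_add, knEigenvalue_eq_one_add]
  gcongr

end Unimodal

lemma knEigenvalue_le_max {n k : ℕ} (hk : k ≤ n) :
    knEigenvalue n k ≤ max (knEigenvalue n (n / 3 : ℕ)) (knEigenvalue n ((n + 2) / 3 : ℕ)) := by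
  rcases le_or_gt (3 * k) n with h | h
  · refine le_max_of_le_left (knEigenvalue_le_knEigenvalue n.cast_nonneg ?_)
    exact sqrt_sub_le_of_le_of_le_third k.cast_nonneg (by exact_mod_cast (by omega : k ≤ n / 3))
      (by exact_mod_cast (by omega : 3 * (n / 3) ≤ n))
  · refine le_max_of_le_right (knEigenvalue_le_knEigenvalue n.cast_nonneg ?_)
    exact sqrt_sub_le_of_third_le_of_le (by exact_mod_cast (by omega : n ≤ 3 * ((n + 2) / 3)))
      (by exact_mod_cast (by omega : (n + 2) / 3 ≤ k)) (by exact_mod_cast hk)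

section CompleteGraphBounds

variable {V : Type*} [Fintype V]

lemma exists_sum_max_sq_le [Nonempty V] (f : V → ℝ) :
    ∃ k ≤ Fintype.card V, ∑ i, max |f i| ((∑ m, |f m|) / Fintype.card V) ^ 2 ≤
      knEigenvalue (Fintype.card V) k * ∑ i, f i ^ 2 := by
  set N := Fintype.card V
  set T : Finset V := {i | (∑ m, |f m|) / N ≤ |f i|}
  have hN : (0 : ℝ) < N := Nat.cast_pos.2 Fintype.card_pos
  have hTN : #T ≤ N := card_le_univ T
  have hTc : (#Tᶜ : ℝ) = N - #T := by rw [card_compl, Nat.cast_sub hTN]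
  have hCS : ∑ m, |f m| ≤ √(#T : ℝ) * √(∑ i ∈ T, f i ^ 2) + √(#Tᶜ : ℝ) * √(∑ i ∈ Tᶜ, f i ^ 2) := by
    rw [← sum_add_sum_compl T]
    exact add_le_add (sum_abs_le_sqrt_card_mul_sqrt _ _) (sum_abs_le_sqrt_card_mul_sqrt _ _)
  refine ⟨#T, hTN, ?_⟩
  calc ∑ i, max |f i| ((∑ m, |f m|) / N) ^ 2
      = ∑ i ∈ T, f i ^ 2 + (N - #T) / N ^ 2 * (∑ m, |f m|) ^ 2 := by
        rw [sum_max_sq_eq, hTc]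
        ring
    _ ≤ √(∑ i ∈ T, f i ^ 2) ^ 2 + (N - #T) / N ^ 2 *
          (√(#T : ℝ) * √(∑ i ∈ T, f i ^ 2) + √(#Tᶜ : ℝ) * √(∑ i ∈ Tᶜ, f i ^ 2)) ^ 2 := by
        rw [Real.sq_sqrt (sum_nonneg fun i _ => sq_nonneg _)]
        have : (0 : ℝ) ≤ N - #T := by rw [← hTc]; positivity
        gcongr
    _ ≤ knEigenvalue N #T * (√(∑ i ∈ T, f i ^ 2) ^ 2 + √(∑ i ∈ Tᶜ, f i ^ 2) ^ 2) :=
        sq_add_mul_sq_le_knEigenvalue_mul hN (Nat.cast_nonneg _) (Nat.cast_le.2 hTN)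
          (Real.sq_sqrt (Nat.cast_nonneg _)) (by rw [Real.sq_sqrt (Nat.cast_nonneg _), hTc]) _ _
    _ = knEigenvalue N #T * ∑ i, f i ^ 2 := by
        rw [Real.sq_sqrt (sum_nonneg fun i _ => sq_nonneg _),
          Real.sq_sqrt (sum_nonneg fun i _ => sq_nonneg _), sum_add_sum_compl]

lemma exists_le_sum_max_sq {k : ℕ} (hk : 0 < k) (hkV : k ≤ Fintype.card V) :
    ∃ f : V → ℝ, f ≠ 0 ∧ knEigenvalue (Fintype.card V) k * ∑ i, f i ^ 2 ≤
      ∑ i, max |f i| ((∑ m, |f m|) / Fintype.card V) ^ 2 := by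
  obtain ⟨S, -, hS⟩ := exists_subset_card_eq (s := (univ : Finset V)) hkV
  set N : ℝ := ((Fintype.card V : ℕ) : ℝ)
  set K : ℝ := ((k : ℕ) : ℝ)
  have hK : 0 < K := Nat.cast_pos.2 hk
  have hKN : K ≤ N := Nat.cast_le.2 hkV
  have hN : 0 < N := hK.trans_le hKN
  have hSc : (#Sᶜ : ℝ) = N - K := by rw [card_compl, Nat.cast_sub (hS ▸ hkV), hS]
  set u := knEigenvalue N K - (N - K) ^ 2 / N ^ 2
  set v := K * (N - K) / N ^ 2
  have hu : 0 < u := by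
    have : (N - K) ^ 2 / N ^ 2 < 1 := (div_lt_one (pow_pos hN 2)).2 (by nlinarith)
    linarith [one_le_knEigenvalue hK.le hKN]
  have hv : 0 ≤ v := div_nonneg (mul_nonneg hK.le (sub_nonneg.2 hKN)) (sq_nonneg N)
  set f : V → ℝ := fun i => if i ∈ S then u else v
  have hsum : ∑ i, |f i| = K * u + (N - K) * v := by
    simpa only [hS, hSc, abs_of_pos hu, abs_of_nonneg hv] using sum_comp_ite_mem S (|·|) u v
  have hsq : ∑ i, f i ^ 2 = K * u ^ 2 + (N - K) * v ^ 2 := by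
    simpa only [hS, hSc] using sum_comp_ite_mem S (· ^ 2) u v
  have hsqS : ∑ i ∈ S, f i ^ 2 = K * u ^ 2 := by
    rw [sum_congr rfl fun i hi => show f i ^ 2 = u ^ 2 by simp [f, hi], sum_const, hS,
      nsmul_eq_mul]
  refine ⟨f, fun h => ?_, ?_⟩
  · obtain ⟨i, hi⟩ := card_pos.1 (hS ▸ hk)
    exact hu.ne' (by simpa [f, hi] using congrFun h i)
  calc knEigenvalue N K * ∑ i, f i ^ 2
      = K * u ^ 2 + (N - K) * ((K * u + (N - K) * v) / N) ^ 2 := by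
        rw [hsq, knEigenvalue_eigenvector hN.ne' hK.le hKN]
    _ = ∑ i ∈ S, f i ^ 2 + #Sᶜ * ((∑ i, |f i|) / N) ^ 2 := by rw [hsqS, hSc, hsum]
    _ ≤ ∑ i, max |f i| ((∑ m, |f m|) / N) ^ 2 :=
        sum_sq_add_card_compl_mul_sq_le f (by positivity) S

end CompleteGraphBounds

section Norms

variable {V : Type*} [Fintype V]

lemma sum_sq_pos {f : V → ℝ} (hf : f ≠ 0) : 0 < ∑ i, f i ^ 2 := by
  obtain ⟨i, hi⟩ := Function.ne_iff.mp hf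
  exact (sum_pos_iff_of_nonneg fun j _ => sq_nonneg (f j)).2 ⟨i, mem_univ i, sq_pos_of_ne_zero hi⟩

lemma nrm2_div_nrm2_le_sqrt {g f : V → ℝ} (hf : f ≠ 0) {L : ℝ}
    (h : ∑ i, g i ^ 2 ≤ L * ∑ i, f i ^ 2) : nrm2 g / nrm2 f ≤ √L := by
  rw [nrm2, nrm2, ← Real.sqrt_div' _ (sum_sq_pos hf).le]
  exact Real.sqrt_le_sqrt ((div_le_iff₀ (sum_sq_pos hf)).2 h)

lemma sqrt_le_nrm2_div_nrm2 {g f : V → ℝ} (hf : f ≠ 0) {L : ℝ}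
    (h : L * ∑ i, f i ^ 2 ≤ ∑ i, g i ^ 2) : √L ≤ nrm2 g / nrm2 f := by
  rw [nrm2, nrm2, ← Real.sqrt_div' _ (sum_sq_pos hf).le]
  exact Real.sqrt_le_sqrt ((le_div_iff₀ (sum_sq_pos hf)).2 h)

lemma sum_sq_mxHL_top (f : V → ℝ) :
    ∑ i, mxHL (⊤ : SimpleGraph V) f i ^ 2 =
      ∑ i, max |f i| ((∑ m, |f m|) / Fintype.card V) ^ 2 := by
  simp only [mxHL_top]

end Norms

lemma exists_pos_knEigenvalue_eq_max {n : ℕ} (hn : 0 < n) :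
    ∃ k, 0 < k ∧ k ≤ n ∧
      knEigenvalue n k = max (knEigenvalue n (n / 3 : ℕ)) (knEigenvalue n ((n + 2) / 3 : ℕ)) := by
  rcases le_total (knEigenvalue n (n / 3 : ℕ)) (knEigenvalue n ((n + 2) / 3 : ℕ)) with h | h
  · exact ⟨(n + 2) / 3, by omega, by omega, (max_eq_right h).symm⟩
  rcases Nat.eq_zero_or_pos (n / 3) with h0 | h0
  · refine ⟨(n + 2) / 3, by omega, by omega, (max_eq_right ?_).symm⟩
    rw [h0, Nat.cast_zero, knEigenvalue_zero]
    exact one_le_knEigenvalue (Nat.cast_nonneg _) (by exact_mod_cast (by omega : (n + 2) / 3 ≤ n))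
  · exact ⟨n / 3, h0, by omega, (max_eq_left h).symm⟩

/-- the `ℓ²` norm of the Hardy–Littlewood maximal operator on the
complete graph `K_n` equals the maximum over `k ∈ {⌊n/3⌋, ⌈n/3⌉}` of
`(1 - k/(2n) + √(4kn - 3k²)/(2n))^(1/2)`, and the supremum is attained. -/
theorem completeGraph_l2_norm (n : ℕ) (hn : 2 ≤ n) :
    sSup {c : ℝ | ∃ f : Fin n → ℝ, f ≠ 0 ∧
        c = nrm2 (mxHL (⊤ : SimpleGraph (Fin n)) f) / nrm2 f} =
      max (knConst n (n / 3)) (knConst n ((n + 2) / 3)) ∧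
    ∃ f : Fin n → ℝ, f ≠ 0 ∧
      nrm2 (mxHL (⊤ : SimpleGraph (Fin n)) f) / nrm2 f =
        max (knConst n (n / 3)) (knConst n ((n + 2) / 3)) := by
  have : Nonempty (Fin n) := ⟨⟨0, by omega⟩⟩
  set L := max (knEigenvalue n (n / 3 : ℕ)) (knEigenvalue n ((n + 2) / 3 : ℕ))
  have hL : max (knConst n (n / 3)) (knConst n ((n + 2) / 3)) = √L :=
    (Real.sqrt_monotone.map_max).symm
  have hupper (f : Fin n → ℝ) (hf : f ≠ 0) : nrm2 (mxHL ⊤ f) / nrm2 f ≤ √L := by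
    obtain ⟨k, hk, hle⟩ := exists_sum_max_sq_le f
    rw [Fintype.card_fin] at hk hle
    refine nrm2_div_nrm2_le_sqrt hf ?_
    rw [sum_sq_mxHL_top, Fintype.card_fin]
    exact hle.trans (mul_le_mul_of_nonneg_right (knEigenvalue_le_max hk)
      (sum_nonneg fun i _ => sq_nonneg _))
  obtain ⟨k, hk0, hkn, hkL⟩ := exists_pos_knEigenvalue_eq_max (by omega : 0 < n)
  obtain ⟨f₀, hf₀, hge⟩ := exists_le_sum_max_sq (V := Fin n) hk0 (by rwa [Fintype.card_fin])
  rw [Fintype.card_fin, hkL] at hge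
  have hf₀L : nrm2 (mxHL ⊤ f₀) / nrm2 f₀ = √L := (hupper f₀ hf₀).antisymm
    (sqrt_le_nrm2_div_nrm2 hf₀ (by rwa [sum_sq_mxHL_top, Fintype.card_fin]))
  rw [hL]
  exact ⟨IsGreatest.csSup_eq ⟨⟨f₀, hf₀, hf₀L.symm⟩, fun _ ⟨f, hf, hc⟩ => hc ▸ hupper f hf⟩,
    f₀, hf₀, hf₀L⟩
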